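/- arXiv:0907.2331 — 4 statements merged into one kernel-verified Lean document; each statement's English description precedes it below -/
import Mathlib

section
/- With notation as above, an element y of the affine Weyl group lying in the double coset W ε^μ W satisfies y ≤ w τ_μ (Bruhat order) for some w ∈ W if and only if y = w_y τ_μ for some w_y ∈ W with w_y ≤ w in the Bruhat order of W. -/
/-!
The subword description of the Bruhat order does not depend on the reduced word: if `u` is a
subword of a reduced word for `v`, then `u` is reached from `v` by repeatedly multiplying by a
left inversion, and each such step can be performed inside any word for `v` by deleting one
letter (strong exchange). Strong exchange comes from the homomorphism
`W → (W → ℤˣ) ⋊ W` whose sign component at `w` is `-1` exactly at the left inversions of `w`.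

For `y ≤ wτ`, write `wτ` as the word `γ δ` with `γ` a reduced word for `w` in the generators of
`W_J` and `δ` a reduced word for `τ`. Then `y` is a subword `α β`, and
`πβ = (πα)⁻¹ y ∈ W_J τ W_J` has length at least `ℓ(τ) = |δ|`, so `β = δ` and `y = πα · τ`
with `πα ≤ w`. Conversely, for any reduced word `γ` for `w` the word `γ δ` is reduced, because
`ℓ(wτ) = ℓ(w) + ℓ(τ)`.
-/

/-- The Bruhat order on a Coxeter group (e.g. an affine Weyl group): `u ≤ v` iff `u` is the
product of a subword of some reduced word for `v`. -/
def BruhatLE {B W : Type*} [Group W] {M : CoxeterMatrix B} (cs : CoxeterSystem M W)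
    (u v : W) : Prop :=
  ∃ ω : List B, cs.IsReduced ω ∧ cs.wordProd ω = v ∧
    ∃ ω' : List B, ω'.Sublist ω ∧ cs.wordProd ω' = u

open List

theorem Finset.prod_range_two_mul {M : Type*} [CommMonoid M] (f : ℕ → M) (m : ℕ) :
    ∏ l ∈ range (2 * m), f l = ∏ k ∈ range m, f (2 * k) * f (2 * k + 1) := by
  induction m with
  | zero => simp
  | succ m ih =>
    rw [Nat.mul_succ, prod_range_succ, prod_range_succ, prod_range_succ, ih, mul_assoc]

theorem SemidirectProduct.mk_pow {N G : Type*} [CommGroup N] [Group G] {φ : G →* MulAut N}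
    (n : N) (g : G) (m : ℕ) :
    (⟨n, g⟩ : N ⋊[φ] G) ^ m = ⟨∏ k ∈ Finset.range m, φ (g ^ k) n, g ^ m⟩ := by
  induction m with
  | zero => ext <;> simp
  | succ m ih => rw [pow_succ, ih, Finset.prod_range_succ, pow_succ]; rfl

section SignFunction

variable {α : Type*}

open scoped Classical in
noncomputable def signAt (a : α) : α → ℤˣ := fun x => if x = a then -1 else 1

theorem signAt_self (a : α) : signAt a a = -1 := by simp [signAt]

theorem signAt_of_ne {a x : α} (h : x ≠ a) : signAt a x = 1 := by simp [signAt, h]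

theorem prod_map_signAt_apply_of_notMem {L : List α} {x : α} (h : x ∉ L) :
    (L.map signAt).prod x = 1 := by
  induction L with
  | nil => rfl
  | cons a L ih =>
    rw [List.mem_cons, not_or] at h
    rw [List.map_cons, List.prod_cons, Pi.mul_apply, ih h.2, signAt_of_ne h.1, one_mul]

end SignFunction

namespace CoxeterSystem

variable {B W : Type*} [Group W] {M : CoxeterMatrix B} (cs : CoxeterSystem M W)

local prefix:100 "s" => cs.simple
local prefix:100 "π" => cs.wordProd
local prefix:100 "ℓ" => cs.length

def conjSign : W →* MulAut (W → ℤˣ) where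
  toFun w :=
    { toFun := fun f x => f (w⁻¹ * x * w)
      invFun := fun f x => f (w * x * w⁻¹)
      left_inv := fun f => funext fun x => by group
      right_inv := fun f => funext fun x => by group
      map_mul' := fun _ _ => rfl }
  map_one' := by ext; simp
  map_mul' := fun _ _ => by ext; simp [mul_assoc]

theorem conjSign_apply (w : W) (f : W → ℤˣ) (x : W) : conjSign w f x = f (w⁻¹ * x * w) := rfl

theorem conjSign_signAt (w a : W) : conjSign w (signAt a) = signAt (w * a * w⁻¹) := by
  funext x
  simp only [conjSign_apply, signAt]
  congr 1
  exact propext ⟨fun h => by rw [← h]; group, fun h => by rw [h]; group⟩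

abbrev SignExt (W : Type*) [Group W] : Type _ :=
  (W → ℤˣ) ⋊[(conjSign : W →* MulAut (W → ℤˣ))] W

noncomputable def signGen (i : B) : SignExt W := ⟨signAt (s i), s i⟩

theorem simple_mul_simple_pow_conj (i i' : B) (k l : ℕ) :
    (s i * s i') ^ k * (s i * (s i' * s i) ^ l) * ((s i * s i') ^ k)⁻¹
      = s i * (s i' * s i) ^ (l + 2 * k) := by
  have hsemi : SemiconjBy (s i) (s i' * s i) (s i * s i') := by
    simp only [SemiconjBy, mul_assoc]
  have hinv : ((s i * s i') ^ k)⁻¹ = (s i' * s i) ^ k := by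
    rw [← inv_pow, mul_inv_rev, cs.inv_simple, cs.inv_simple]
  rw [hinv, ← mul_assoc, ← (hsemi.pow_right k).eq, mul_assoc, mul_assoc, ← pow_add, ← pow_add]
  ring_nf

theorem signGen_mul_signGen (i i' : B) :
    signGen cs i * signGen cs i' =
      ⟨signAt (s i * (s i' * s i) ^ 0) * signAt (s i * (s i' * s i) ^ 1), s i * s i'⟩ := by
  refine SemidirectProduct.ext ?_ rfl
  rw [SemidirectProduct.mul_left]
  simp only [signGen, conjSign_signAt, cs.inv_simple, pow_zero, pow_one, mul_one, mul_assoc]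

/- The sign component of `(signGen i * signGen i') ^ m` is the product of `signAt` over the `2m`
reflections `s i * (s i' * s i) ^ l`, `l < 2m`, which repeat with period `m`. -/
theorem isLiftable_signGen : M.IsLiftable (signGen cs) := by
  intro i i'
  set t : ℕ → W := fun l => s i * (s i' * s i) ^ l
  have ht : ∀ l, t (l + M i i') = t l := fun l => by
    simp only [t, pow_add, cs.simple_mul_simple_pow', mul_one]
  have hconj : ∀ k l, conjSign ((s i * s i') ^ k) (signAt (t l)) = signAt (t (l + 2 * k)) :=
    fun k l => by rw [conjSign_signAt, cs.simple_mul_simple_pow_conj]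
  rw [signGen_mul_signGen, SemidirectProduct.mk_pow, cs.simple_mul_simple_pow]
  refine SemidirectProduct.ext ?_ rfl
  calc ∏ k ∈ Finset.range (M i i'), conjSign ((s i * s i') ^ k) (signAt (t 0) * signAt (t 1))
      = ∏ l ∈ Finset.range (2 * M i i'), signAt (t l) := by
        simp only [map_mul, hconj, Finset.prod_range_two_mul, zero_add, add_comm 1]
    _ = (∏ l ∈ Finset.range (M i i'), signAt (t l)) ^ 2 := by
        rw [two_mul, Finset.prod_range_add, sq]
        simp only [add_comm (M i i'), ht]
    _ = 1 := funext fun _ => Int.units_sq _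

noncomputable def signHom : W →* SignExt W := cs.lift ⟨signGen cs, cs.isLiftable_signGen⟩

theorem signHom_simple (i : B) : cs.signHom (s i) = ⟨signAt (s i), s i⟩ :=
  cs.lift_apply_simple cs.isLiftable_signGen i

theorem signHom_right (w : W) : (cs.signHom w).right = w := by
  have : SemidirectProduct.rightHom.comp cs.signHom = MonoidHom.id W :=
    cs.ext_simple fun i => by simp [signHom_simple]
  exact DFunLike.congr_fun this w

noncomputable def leftInversionSign (w : W) : W → ℤˣ := (cs.signHom w).left

theorem leftInversionSign_one : cs.leftInversionSign 1 = 1 := by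
  simp [leftInversionSign]

theorem leftInversionSign_mul (x y : W) :
    cs.leftInversionSign (x * y) =
      cs.leftInversionSign x * conjSign x (cs.leftInversionSign y) := by
  simp only [leftInversionSign, map_mul, SemidirectProduct.mul_left, signHom_right]

theorem leftInversionSign_mul_apply (x y z : W) :
    cs.leftInversionSign (x * y) z =
      cs.leftInversionSign x z * cs.leftInversionSign y (x⁻¹ * z * x) := by
  rw [leftInversionSign_mul]; rfl

theorem leftInversionSign_simple (i : B) : cs.leftInversionSign (s i) = signAt (s i) := by
  simp [leftInversionSign, signHom_simple]

theorem leftInversionSign_wordProd (ω : List B) :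
    cs.leftInversionSign (π ω) = ((cs.leftInvSeq ω).map signAt).prod := by
  induction ω with
  | nil => simp [leftInversionSign_one]
  | cons i ω ih =>
    rw [cs.wordProd_cons, leftInversionSign_mul, ih, leftInversionSign_simple, leftInvSeq,
      List.map_cons, List.prod_cons, map_list_prod, List.map_map, List.map_map]
    congr 2
    refine List.map_congr_left fun t _ => ?_
    simp [conjSign_signAt, cs.inv_simple]

theorem leftInversionSign_self {t : W} (ht : cs.IsReflection t) :
    cs.leftInversionSign t t = -1 := by
  obtain ⟨g, i, rfl⟩ := ht
  have h1 : g⁻¹ * (g * s i * g⁻¹) * g = s i := by group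
  have h2 : (g * s i)⁻¹ * (g * s i * g⁻¹) * (g * s i) = s i := by
    rw [mul_inv_rev, cs.inv_simple]
    simp only [mul_assoc, inv_mul_cancel_left, cs.simple_mul_simple_cancel_left]
  have hcancel := cs.leftInversionSign_mul_apply g g⁻¹ (g * s i * g⁻¹)
  rw [mul_inv_cancel, leftInversionSign_one, h1, Pi.one_apply] at hcancel
  rw [cs.leftInversionSign_mul_apply (g * s i), cs.leftInversionSign_mul_apply,
    leftInversionSign_simple, h1, h2, signAt_self, mul_right_comm, ← hcancel, one_mul]

theorem mem_leftInvSeq_of_leftInversionSign {ω : List B} {t : W}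
    (h : cs.leftInversionSign (π ω) t = -1) : t ∈ cs.leftInvSeq ω := by
  by_contra hmem
  rw [leftInversionSign_wordProd, prod_map_signAt_apply_of_notMem hmem] at h
  exact absurd h (by decide)

theorem leftInversionSign_eq_neg_one_iff {w t : W} (ht : cs.IsReflection t) :
    cs.leftInversionSign w t = -1 ↔ cs.IsLeftInversion w t := by
  have of_sign : ∀ {w}, cs.leftInversionSign w t = -1 → cs.IsLeftInversion w t := fun {w} h => by
    obtain ⟨ω, hω, rfl⟩ := cs.exists_isReduced w
    exact cs.isLeftInversion_of_mem_leftInvSeq hω (cs.mem_leftInvSeq_of_leftInversionSign h)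
  refine ⟨of_sign, fun ⟨_, hlt⟩ => ?_⟩
  rcases Int.units_eq_one_or (cs.leftInversionSign w t) with h | h
  · have hsign : cs.leftInversionSign (t * w) t = -1 := by
      rw [leftInversionSign_mul_apply, leftInversionSign_self cs ht, ht.inv, ht.mul_self,
        one_mul, h, mul_one]
    have hinv := (of_sign hsign).2
    rw [← mul_assoc, ht.mul_self, one_mul] at hinv
    omega
  · exact h

theorem mem_leftInvSeq_of_isLeftInversion {ω : List B} {t : W}
    (h : cs.IsLeftInversion (π ω) t) : t ∈ cs.leftInvSeq ω :=
  cs.mem_leftInvSeq_of_leftInversionSign ((cs.leftInversionSign_eq_neg_one_iff h.1).2 h)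

theorem exists_eraseIdx_of_isLeftInversion {ω : List B} {t : W} (h : cs.IsLeftInversion (π ω) t) :
    ∃ j < ω.length, t * π ω = π (ω.eraseIdx j) := by
  obtain ⟨j, hj, rfl⟩ := List.mem_iff_getElem.mp (cs.mem_leftInvSeq_of_isLeftInversion h)
  rw [length_leftInvSeq] at hj
  refine ⟨j, hj, ?_⟩
  rw [← List.getD_eq_getElem _ 1, cs.getD_leftInvSeq_mul_wordProd]

theorem exists_reduced_sublist (ω : List B) :
    ∃ ω' : List B, ω'.Sublist ω ∧ cs.IsReduced ω' ∧ π ω' = π ω := by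
  induction ω with
  | nil => exact ⟨[], Sublist.refl _, by simp [IsReduced], rfl⟩
  | cons i α ih =>
    obtain ⟨α', hsub, hred, hprod⟩ := ih
    have hprod_cons : π (i :: α) = s i * π α' := by rw [cs.wordProd_cons, hprod]
    rcases cs.length_simple_mul (π α') i with hup | hdown
    · refine ⟨i :: α', hsub.cons_cons i, ?_, by rw [hprod_cons, cs.wordProd_cons]⟩
      rw [IsReduced, cs.wordProd_cons, hup, hred, List.length_cons]
    · obtain ⟨j, hj, hdel⟩ := cs.exists_eraseIdx_of_isLeftInversion (ω := α')
        ⟨cs.isReflection_simple i, by omega⟩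
      refine ⟨α'.eraseIdx j, ((α'.eraseIdx_sublist j).trans hsub).cons i, ?_,
        by rw [hprod_cons, hdel]⟩
      rw [IsReduced, ← hdel, List.length_eraseIdx_of_lt hj]
      rw [hred] at hdown
      omega

def ReflectionStep (x y : W) : Prop := ∃ t, cs.IsLeftInversion y t ∧ x = t * y

abbrev ReflectionLE : W → W → Prop := Relation.ReflTransGen cs.ReflectionStep

theorem reflectionStep_mul {t x : W} (ht : cs.IsReflection t) (h : ℓ x < ℓ (t * x)) :
    cs.ReflectionStep x (t * x) :=
  ⟨t, ⟨ht, by rwa [← mul_assoc, ht.mul_self, one_mul]⟩, by rw [← mul_assoc, ht.mul_self, one_mul]⟩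

variable {cs} in
theorem ReflectionStep.simple_mul {z y : W} (h : cs.ReflectionStep z y) (i : B) :
    cs.ReflectionLE (s i * z) (s i * y) ∨ s i * z = y := by
  obtain ⟨t, ⟨ht, hlt⟩, rfl⟩ := h
  by_cases hup : ℓ (s i * (t * y)) < ℓ (s i * y)
  · left
    have hconj : s i * y = s i * t * (s i)⁻¹ * (s i * (t * y)) := by
      rw [mul_assoc (s i * t), inv_mul_cancel_left, mul_assoc, ← mul_assoc t, ht.mul_self, one_mul]
    rw [hconj] at hup ⊢
    exact .single (cs.reflectionStep_mul (ht.conj _) hup)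
  right
  have hdown : ℓ (s i * y) + 1 = ℓ y := by
    rcases cs.length_simple_mul y i with h | h <;>
      rcases cs.length_simple_mul (t * y) i with h' | h' <;> omega
  obtain ⟨α, hα, hαy⟩ := cs.exists_isReduced (s i * y)
  have hy : y = π (i :: α) := by rw [cs.wordProd_cons, ← hαy, cs.simple_mul_simple_cancel_left]
  obtain ⟨j, hj, hdel⟩ := cs.exists_eraseIdx_of_isLeftInversion (ω := i :: α)
    ⟨ht, by rwa [← hy]⟩
  rw [← hy] at hdel
  -- deleting a letter after the leading `s i` would make `s i * (t * y)` too short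
  cases j with
  | zero => rw [hdel, eraseIdx_cons_zero, ← hαy, cs.simple_mul_simple_cancel_left]
  | succ k =>
    rw [hdel, eraseIdx_cons_succ, cs.wordProd_cons, cs.simple_mul_simple_cancel_left] at hup
    have hk : k < α.length := by simpa using hj
    have := cs.length_wordProd_le (α.eraseIdx k)
    rw [length_eraseIdx_of_lt hk] at this
    rw [hαy, hα] at hup
    omega

variable {cs} in
theorem ReflectionLE.simple_mul_or {x y : W} (h : cs.ReflectionLE x y) (i : B) :
    cs.ReflectionLE (s i * x) y ∨ cs.ReflectionLE (s i * x) (s i * y) := by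
  induction h with
  | refl => exact .inr .refl
  | tail _ hstep ih =>
    rcases ih with h | h
    · exact .inl (h.tail hstep)
    · rcases hstep.simple_mul i with h' | h'
      · exact .inr (h.trans h')
      · exact .inl (h' ▸ h)

theorem reflectionLE_wordProd_of_sublist {ω ω' : List B} (hω : cs.IsReduced ω)
    (h : ω'.Sublist ω) : cs.ReflectionLE (π ω') (π ω) := by
  induction ω generalizing ω' with
  | nil => rw [sublist_nil.mp h]
  | cons i α ih =>
    have hα : cs.IsReduced α := hω.drop 1
    have hstep : cs.ReflectionStep (π α) (π (i :: α)) := by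
      rw [cs.wordProd_cons]
      refine cs.reflectionStep_mul (cs.isReflection_simple i) ?_
      rw [← cs.wordProd_cons, hω, hα, length_cons]
      omega
    rcases sublist_cons_iff.mp h with h | ⟨γ, rfl, hγ⟩
    · exact (ih hα h).tail hstep
    · rw [cs.wordProd_cons, cs.wordProd_cons]
      rcases (ih hα hγ).simple_mul_or i with h' | h'
      · exact h'.tail (by rwa [← cs.wordProd_cons])
      · exact h'

variable {cs} in
theorem ReflectionLE.exists_sublist {u v : W} (h : cs.ReflectionLE u v) {ω : List B}
    (hω : π ω = v) : ∃ ω' : List B, ω'.Sublist ω ∧ π ω' = u := by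
  induction h generalizing ω with
  | refl => exact ⟨ω, Sublist.refl ω, hω⟩
  | tail _ hstep ih =>
    obtain ⟨t, ht, rfl⟩ := hstep
    subst hω
    obtain ⟨j, -, hdel⟩ := cs.exists_eraseIdx_of_isLeftInversion ht
    obtain ⟨ω', hsub, hprod⟩ := ih hdel.symm
    exact ⟨ω', hsub.trans (ω.eraseIdx_sublist j), hprod⟩

theorem wordProd_mem_closure {J : Set B} {ω : List B} (h : ∀ i ∈ ω, i ∈ J) :
    π ω ∈ Subgroup.closure (cs.simple '' J) := by
  induction ω with
  | nil => exact one_mem _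
  | cons i ω ih =>
    rw [forall_mem_cons] at h
    exact mul_mem (Subgroup.subset_closure ⟨i, h.1, rfl⟩) (ih h.2)

theorem exists_reduced_word_of_mem_closure {J : Set B} {w : W}
    (hw : w ∈ Subgroup.closure (cs.simple '' J)) :
    ∃ ω : List B, (∀ i ∈ ω, i ∈ J) ∧ cs.IsReduced ω ∧ π ω = w := by
  obtain ⟨ω, hJ, rfl⟩ : ∃ ω : List B, (∀ i ∈ ω, i ∈ J) ∧ π ω = w := by
    induction hw using Subgroup.closure_induction with
    | mem _ h =>
      obtain ⟨i, hi, rfl⟩ := h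
      exact ⟨[i], by simpa using hi, cs.wordProd_singleton i⟩
    | one => exact ⟨[], by simp, cs.wordProd_nil⟩
    | mul _ _ _ _ ha hb =>
      obtain ⟨ωa, ha, rfl⟩ := ha
      obtain ⟨ωb, hb, rfl⟩ := hb
      exact ⟨ωa ++ ωb, by simpa [or_imp, forall_and] using ⟨ha, hb⟩, cs.wordProd_append ωa ωb⟩
    | inv _ _ h =>
      obtain ⟨ω, hω, rfl⟩ := h
      exact ⟨ω.reverse, by simpa using hω, cs.wordProd_reverse ω⟩
  obtain ⟨ω', hsub, hred, hprod⟩ := cs.exists_reduced_sublist ω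
  exact ⟨ω', fun i hi => hJ i (hsub.subset hi), hred, hprod⟩

variable {cs} in
theorem IsReduced.eq_of_sublist {β δ : List B} (hδ : cs.IsReduced δ) (hβ : β.Sublist δ)
    (h : ℓ (π δ) ≤ ℓ (π β)) : β = δ :=
  hβ.eq_of_length_le (by have := cs.length_wordProd_le β; rw [hδ] at h; omega)

end CoxeterSystem

theorem BruhatLE.exists_sublist {B W : Type*} [Group W] {M : CoxeterMatrix B}
    {cs : CoxeterSystem M W} {u v : W} (h : BruhatLE cs u v) {ω : List B}
    (hv : cs.wordProd ω = v) : ∃ ω' : List B, ω'.Sublist ω ∧ cs.wordProd ω' = u := by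
  obtain ⟨ω₀, hω₀, rfl, ω₀', hsub, rfl⟩ := h
  exact (cs.reflectionLE_wordProd_of_sublist hω₀ hsub).exists_sublist hv

theorem stmt4_general {B W : Type*} [Group W] {M : CoxeterMatrix B} (cs : CoxeterSystem M W)
    (J : Set B) (τ : W)
    (hτmin : ∀ u ∈ Subgroup.closure (cs.simple '' J), ∀ v ∈ Subgroup.closure (cs.simple '' J),
      cs.length τ ≤ cs.length (u * τ * v))
    (hadd : ∀ w ∈ Subgroup.closure (cs.simple '' J),
      cs.length (w * τ) = cs.length w + cs.length τ)
    (y : W)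
    (hy : ∃ u ∈ Subgroup.closure (cs.simple '' J), ∃ v ∈ Subgroup.closure (cs.simple '' J),
      y = u * τ * v)
    (w : W) (hw : w ∈ Subgroup.closure (cs.simple '' J)) :
    BruhatLE cs y (w * τ) ↔
      ∃ wy ∈ Subgroup.closure (cs.simple '' J), BruhatLE cs wy w ∧ y = wy * τ := by
  obtain ⟨δ, hδ, rfl⟩ := cs.exists_isReduced τ
  constructor
  · intro hle
    obtain ⟨γ, hγJ, hγ, rfl⟩ := cs.exists_reduced_word_of_mem_closure hw
    obtain ⟨ζ, hζ, rfl⟩ := hle.exists_sublist (cs.wordProd_append γ δ)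
    obtain ⟨α, β, rfl, hα, hβ⟩ := sublist_append_iff.mp hζ
    have hαJ := cs.wordProd_mem_closure fun i hi => hγJ i (hα.subset hi)
    obtain ⟨u, hu, v, hv, huv⟩ := hy
    have hβ_eq : cs.wordProd β = (cs.wordProd α)⁻¹ * u * cs.wordProd δ * v := by
      rw [mul_assoc _ u, mul_assoc _ (u * _), ← huv, cs.wordProd_append, inv_mul_cancel_left]
    obtain rfl : β = δ := hδ.eq_of_sublist hβ (hβ_eq ▸ hτmin _ (mul_mem (inv_mem hαJ) hu) _ hv)
    exact ⟨_, hαJ, ⟨γ, hγ, rfl, α, hα, rfl⟩, cs.wordProd_append α β⟩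
  · rintro ⟨wy, -, ⟨ω, hω, rfl, ω', hsub, rfl⟩, rfl⟩
    have hred : cs.IsReduced (ω ++ δ) := by
      rw [CoxeterSystem.IsReduced, cs.wordProd_append, hadd _ hw, hω, hδ, length_append]
    exact ⟨ω ++ δ, hred, cs.wordProd_append ω δ, ω' ++ δ, hsub.append (Sublist.refl δ),
      cs.wordProd_append ω' δ⟩

/-- Model the (extended) affine Weyl group `W̃` as a Coxeter group with
Coxeter system `cs`, the finite Weyl group `W` as the standard parabolic subgroup `WJ`
generated by the simple reflections indexed by `J`, and `τ = τ_μ` the unique shortest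
element of the double coset `W ε^μ W = WJ τ WJ` (hypotheses `hτmin`, `hτuniq`), with
`ℓ(w τ) = ℓ(w) + ℓ(τ)` for `w ∈ WJ` (hypothesis `hadd`).
Then an element `y ∈ WJ τ WJ` satisfies `y ≤ w τ` in Bruhat order (for `w ∈ WJ`)
if and only if `y = w_y τ` for some `w_y ∈ WJ` with `w_y ≤ w`. -/
theorem stmt4 {B W : Type*} [Group W] {M : CoxeterMatrix B} (cs : CoxeterSystem M W)
    (J : Set B) (τ : W)
    (hτmin : ∀ u ∈ Subgroup.closure (cs.simple '' J), ∀ v ∈ Subgroup.closure (cs.simple '' J),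
      cs.length τ ≤ cs.length (u * τ * v))
    (hτuniq : ∀ u ∈ Subgroup.closure (cs.simple '' J), ∀ v ∈ Subgroup.closure (cs.simple '' J),
      cs.length (u * τ * v) = cs.length τ → u * τ * v = τ)
    (hadd : ∀ w ∈ Subgroup.closure (cs.simple '' J),
      cs.length (w * τ) = cs.length w + cs.length τ)
    (y : W)
    (hy : ∃ u ∈ Subgroup.closure (cs.simple '' J), ∃ v ∈ Subgroup.closure (cs.simple '' J),
      y = u * τ * v)
    (w : W) (hw : w ∈ Subgroup.closure (cs.simple '' J)) :
    BruhatLE cs y (w * τ) ↔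
      ∃ wy ∈ Subgroup.closure (cs.simple '' J), BruhatLE cs wy w ∧ y = wy * τ :=
  stmt4_general cs J τ hτmin hadd y hy w hw
end

section
/- Two elements x, x' ∈ W̃ that are P-fundamental resp. P'-fundamental and lie in the same σ-conjugacy class [x] = [x'] of G(L) are σ-conjugate under the finite Weyl group W; in particular they are K-σ-conjugate. -/
/-!
Write `x = π ε^λ`. Fundamentality inside the Levi gives rationals `G j ∈ [0, 1)` (the rank of
`j` in its level set of `c`, divided by the size of that level set) with `λ = ν + G ∘ π - G`,
where `ν` is the Newton point, constant on the cycles of `π`, and `G` is injective on each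
cycle. Hence `G (π^t j) = fract (G j - t ν_j)`, so `π^t j = π^s j` iff `(t - s) ν_j ∈ ℤ`, and
the cycle through `j` has length `den ν_j`. Starting a cycle at the point `b` where `G` is
minimal, `λ (π^t b) = ν_b + fract (-(t+1) ν_b) - fract (-t ν_b)` depends on `ν_b` only.
So `(π, λ)` is determined up to conjugation by the multiset of Newton values: matching the
cycles of equal Newton value of `x` and `x'` gives `w`.
-/

/-- `d(i,j)` for an affine root computation in `GL_h`: the `t`-adic bound for the entry
`(i,j)` of an Iwahori matrix (`0` above the diagonal, `1` below). -/
def dlt {h : ℕ} (i j : Fin h) : ℤ := if i < j then 0 else 1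

/-- `P_c`-fundamental, combinatorially, for `GL_h`: a semistandard parabolic `P = MN` of
`GL_h` is encoded by `c : Fin h → ℚ` (Levi roots: `c i = c j`; roots in `N`: `c i > c j`).
The element `x = π ε^λ` of the extended affine Weyl group is `P`-fundamental iff
`x ∈ W̃_M` (`π` preserves the level sets of `c`), `x I_M x⁻¹ = I_M`, `x I_N x⁻¹ ⊆ I_N`, and
`x⁻¹ I_N̄ x ⊆ I_N̄`; conjugation sends the affine root space `U_{ij}(t^k)` to
`U_{π i, π j}(t^{k + λ_i - λ_j})`, giving the conditions below. -/
def PFund {h : ℕ} (c : Fin h → ℚ) (π : Equiv.Perm (Fin h)) (lam : Fin h → ℤ) : Prop :=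
  (∀ j, c (π j) = c j) ∧
  (∀ i j, i ≠ j → c i = c j → dlt (π i) (π j) = dlt i j + lam i - lam j) ∧
  (∀ i j, c j < c i → dlt (π i) (π j) ≤ dlt i j + lam i - lam j) ∧
  (∀ i j, c i < c j → dlt i j + lam i - lam j ≤ dlt (π i) (π j))

/-- The Newton point of `x = π ε^λ ∈ W̃` for `GL_h`: the average of `λ` over the orbits
of `π`, `ν_j = (1/m) Σ_{i<m} λ(π^i j)` with `m` the order of `π`. -/
noncomputable def newtonPt {h : ℕ} (π : Equiv.Perm (Fin h)) (lam : Fin h → ℤ) :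
    Fin h → ℚ :=
  fun j => (∑ i ∈ Finset.range (orderOf π), (lam ((π ^ i) j) : ℚ)) / (orderOf π : ℚ)

open Equiv Finset

theorem Rat.exists_intCast_eq_mul_iff (q : ℚ) (m : ℤ) :
    (∃ z : ℤ, (m : ℚ) * q = z) ↔ (q.den : ℤ) ∣ m := by
  constructor
  · rintro ⟨z, hz⟩
    have hmul : (q.den : ℤ) ∣ q.num * m := ⟨z, by
      have := q.mul_den_eq_num
      exact_mod_cast (show (q.num : ℚ) * m = q.den * z by rw [← this, ← hz]; ring)⟩
    exact Int.dvd_of_dvd_mul_right_of_gcd_one hmul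
      (by simpa [Int.gcd, Nat.coprime_comm] using q.reduced)
  · rintro ⟨k, rfl⟩
    exact ⟨k * q.num, by push_cast; rw [← q.mul_den_eq_num]; ring⟩

theorem Rat.exists_intCast_eq_sub_mul_iff (q : ℚ) (s t : ℕ) :
    (∃ z : ℤ, ((s : ℚ) - t) * q = z) ↔ t ≡ s [MOD q.den] := by
  rw [Nat.modEq_iff_dvd, ← Rat.exists_intCast_eq_mul_iff]
  push_cast
  rfl

theorem Equiv.Perm.SameCycle.of_pow_apply_eq_pow_apply {α : Type*} {f : Perm α} {x y : α}
    {s t : ℕ} (h : (f ^ t) x = (f ^ s) y) : f.SameCycle x y :=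
  Perm.sameCycle_pow_left.1 <| Perm.sameCycle_pow_right.1 <| by rw [h]

theorem Equiv.Perm.exists_conj_of_cycle_reps {α : Type*} [Finite α] {π π' : Perm α}
    {p p' : α → Prop} (hp : ∀ j, ∃ b : {b // p b}, ∃ n : ℕ, (π ^ n) b = j)
    (hp_unique : ∀ b b', p b → p b' → π.SameCycle b b' → b = b')
    (hp'_unique : ∀ b b', p' b → p' b' → π'.SameCycle b b' → b = b')
    (e₀ : {b // p b} → {b // p' b}) (he₀ : Function.Injective e₀)
    (hperiod : ∀ (b : {b // p b}) (s t : ℕ),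
      (π ^ t) b = (π ^ s) b ↔ (π' ^ t) (e₀ b) = (π' ^ s) (e₀ b)) :
    ∃ e : Perm α, (∀ j, e (π j) = π' (e j)) ∧
      ∀ (b : {b // p b}) (t : ℕ), e ((π ^ t) b) = (π' ^ t) (e₀ b) := by
  choose b n hn using id hp
  let e : α → α := fun j => (π' ^ n j) (e₀ (b j))
  have he : ∀ (c : {b // p b}) (t : ℕ), e ((π ^ t) c) = (π' ^ t) (e₀ c) := by
    intro c t
    have hj := hn ((π ^ t) c)
    have hbc : b ((π ^ t) c) = c :=
      Subtype.ext <| hp_unique _ _ (b _).2 c.2 (.of_pow_apply_eq_pow_apply hj)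
    rw [hbc] at hj
    show (π' ^ n _) (e₀ (b _)) = _
    rw [hbc, ← hperiod, hj]
  have he_inj : Function.Injective e := by
    intro j j' h
    obtain ⟨c, t, rfl⟩ := hp j
    obtain ⟨c', s, rfl⟩ := hp j'
    rw [he, he] at h
    have hcc' : c = c' :=
      he₀ <| Subtype.ext <| hp'_unique _ _ (e₀ c).2 (e₀ c').2 (.of_pow_apply_eq_pow_apply h)
    subst hcc'
    exact (hperiod c s t).2 h
  refine ⟨Equiv.ofBijective e (Finite.injective_iff_bijective.1 he_inj), ?_, he⟩
  intro j
  obtain ⟨c, t, rfl⟩ := hp j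
  simp only [Equiv.ofBijective_apply]
  rw [← Perm.mul_apply π, ← pow_succ', he, he, pow_succ', Perm.mul_apply]

def IsCycleMin {α β : Type*} [LinearOrder β] (π : Perm α) (G : α → β) (b : α) : Prop :=
  ∀ i, π.SameCycle b i → G b ≤ G i

theorem exists_isCycleMin_pow_apply_eq {α β : Type*} [Finite α] [LinearOrder β] (π : Perm α)
    (G : α → β) (j : α) : ∃ b : {b // IsCycleMin π G b}, ∃ n : ℕ, (π ^ n) b = j := by
  have := Fintype.ofFinite α
  classical
  obtain ⟨b, hb, hmin⟩ := (Finset.univ.filter (π.SameCycle j)).exists_min_image G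
    ⟨j, by simpa using Perm.SameCycle.rfl⟩
  simp only [Finset.mem_filter, Finset.mem_univ, true_and] at hb hmin
  exact ⟨⟨b, fun i hi => hmin i (hb.trans hi)⟩, hb.symm.exists_nat_pow_eq⟩

structure IsFundamental {α : Type*} (π : Perm α) (lam : α → ℤ) (ν G : α → ℚ) : Prop where
  newton_apply : ∀ j, ν (π j) = ν j
  G_nonneg : ∀ j, 0 ≤ G j
  G_lt_one : ∀ j, G j < 1
  lam_eq : ∀ j, (lam j : ℚ) = ν j + G (π j) - G j
  eq_of_sameCycle : ∀ i j, π.SameCycle i j → G i = G j → i = j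

namespace IsFundamental

variable {α : Type*} {π π' : Perm α} {lam lam' : α → ℤ} {ν ν' G G' : α → ℚ}

theorem newton_pow_apply (F : IsFundamental π lam ν G) (n : ℕ) (j : α) :
    ν ((π ^ n) j) = ν j := by
  induction n with
  | zero => rfl
  | succ n ih => rw [pow_succ', Perm.mul_apply, F.newton_apply, ih]

theorem G_pow_apply (F : IsFundamental π lam ν G) (n : ℕ) (j : α) :
    G ((π ^ n) j) = Int.fract (G j - n * ν j) := by
  induction n with
  | zero => simp [Int.fract_eq_self.2 ⟨F.G_nonneg j, F.G_lt_one j⟩]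
  | succ n ih =>
    rw [pow_succ', Perm.mul_apply, ← Int.fract_eq_self.2 ⟨F.G_nonneg _, F.G_lt_one _⟩,
      Int.fract_eq_fract]
    refine ⟨lam ((π ^ n) j) - ⌊G j - n * ν j⌋, ?_⟩
    have := F.lam_eq ((π ^ n) j)
    rw [F.newton_pow_apply, ih, ← Int.self_sub_floor] at this
    rw [Int.cast_sub, Nat.cast_succ]
    linarith

theorem pow_apply_eq_pow_apply_iff (F : IsFundamental π lam ν G) (s t : ℕ) (j : α) :
    (π ^ t) j = (π ^ s) j ↔ t ≡ s [MOD (ν j).den] := by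
  rw [← Rat.exists_intCast_eq_sub_mul_iff]
  constructor
  · intro h
    have := congrArg G h
    rw [F.G_pow_apply, F.G_pow_apply, Int.fract_eq_fract] at this
    obtain ⟨z, hz⟩ := this
    exact ⟨z, by linarith⟩
  · intro h
    refine F.eq_of_sameCycle _ _ (Perm.sameCycle_pow_left.2 (Perm.sameCycle_pow_right.2 .rfl)) ?_
    rw [F.G_pow_apply, F.G_pow_apply, Int.fract_eq_fract]
    obtain ⟨z, hz⟩ := h
    exact ⟨z, by linarith⟩

theorem eq_of_isCycleMin (F : IsFundamental π lam ν G) {b b' : α} (hb : IsCycleMin π G b)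
    (hb' : IsCycleMin π G b') (hbb' : π.SameCycle b b') : b = b' :=
  F.eq_of_sameCycle b b' hbb' (le_antisymm (hb b' hbb') (hb' b hbb'.symm))

theorem G_pow_apply_of_isCycleMin (F : IsFundamental π lam ν G) {b : α}
    (hb : IsCycleMin π G b) (t : ℕ) :
    G ((π ^ t) b) = G b + Int.fract (-t * ν b) := by
  have hmin := hb ((π ^ t) b) (Perm.sameCycle_pow_right.2 .rfl)
  rw [F.G_pow_apply] at hmin ⊢
  have hsplit : G b - t * ν b = (G b + Int.fract (-t * ν b)) + ⌊-t * ν b⌋ := by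
    rw [← Int.self_sub_fract]; ring
  rw [hsplit, Int.fract_add_intCast] at hmin ⊢
  -- if `G b + fract (-t ν b) ≥ 1`, its fractional part would drop below `G b`
  refine Int.fract_eq_self.2 ⟨by linarith [F.G_nonneg b, Int.fract_nonneg (-t * ν b)], ?_⟩
  by_contra! h
  have : Int.fract (G b + Int.fract (-t * ν b)) = G b + Int.fract (-t * ν b) - 1 := by
    rw [Int.fract_eq_iff]
    refine ⟨by linarith, by linarith [F.G_lt_one b, Int.fract_lt_one (-t * ν b)], 1, by ring⟩
  linarith [Int.fract_lt_one (-t * ν b)]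

theorem lam_pow_apply_of_isCycleMin (F : IsFundamental π lam ν G) {b : α}
    (hb : IsCycleMin π G b) (t : ℕ) :
    (lam ((π ^ t) b) : ℚ) = ν b + Int.fract (-(t + 1) * ν b) - Int.fract (-t * ν b) := by
  have := F.G_pow_apply_of_isCycleMin hb (t + 1)
  rw [pow_succ', Perm.mul_apply] at this
  rw [F.lam_eq, F.newton_pow_apply, this, F.G_pow_apply_of_isCycleMin hb]
  push_cast
  ring

theorem card_newton_fiber_eq_mul_den [Finite α] (F : IsFundamental π lam ν G) (v : ℚ) :
    Nat.card {j // ν j = v} = Nat.card {b : {b // IsCycleMin π G b} // ν b = v} * v.den := by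
  let Φ : {b : {b // IsCycleMin π G b} // ν b = v} × Fin v.den → {j // ν j = v} :=
    fun bt => ⟨(π ^ (bt.2 : ℕ)) bt.1.1, by rw [F.newton_pow_apply, bt.1.2]⟩
  have hΦ : Function.Bijective Φ := by
    constructor
    · rintro ⟨⟨b, hbv⟩, t⟩ ⟨⟨b', hb'v⟩, s⟩ h
      have h : (π ^ (t : ℕ)) b = (π ^ (s : ℕ)) b' := congrArg Subtype.val h
      have hbb' : b = b' :=
        Subtype.ext <| F.eq_of_isCycleMin b.2 b'.2 (.of_pow_apply_eq_pow_apply h)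
      subst hbb'
      rw [F.pow_apply_eq_pow_apply_iff, hbv] at h
      simp [Fin.ext (h.eq_of_lt_of_lt t.2 s.2)]
    · rintro ⟨j, rfl⟩
      obtain ⟨b, n, rfl⟩ := exists_isCycleMin_pow_apply_eq π G j
      have hb : ν b = ν ((π ^ n) b) := (F.newton_pow_apply n b).symm
      refine ⟨⟨⟨b, hb⟩, ⟨n % (ν b).den, hb ▸ Nat.mod_lt _ (ν b).den_pos⟩⟩, Subtype.ext ?_⟩
      exact (F.pow_apply_eq_pow_apply_iff _ _ _).2 (Nat.mod_modEq _ _)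
  rw [← Nat.card_congr (Equiv.ofBijective Φ hΦ), Nat.card_prod, Nat.card_fin]

theorem exists_equiv_isCycleMin [Finite α] (F : IsFundamental π lam ν G)
    (F' : IsFundamental π' lam' ν' G')
    (hν : ∃ u : Perm α, ∀ j, ν' j = ν (u j)) :
    ∃ e : {b // IsCycleMin π G b} ≃ {b // IsCycleMin π' G' b}, ∀ b, ν' (e b) = ν b := by
  obtain ⟨u, hu⟩ := hν
  have hfiber (v : ℚ) : Nat.card {b : {b // IsCycleMin π G b} // ν b = v} =
      Nat.card {b : {b // IsCycleMin π' G' b} // ν' b = v} := by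
    have hcard : Nat.card {j // ν j = v} = Nat.card {j // ν' j = v} :=
      Nat.card_congr (u.subtypeEquiv fun j => by rw [hu]).symm
    rw [F.card_newton_fiber_eq_mul_den, F'.card_newton_fiber_eq_mul_den] at hcard
    exact Nat.eq_of_mul_eq_mul_right v.den_pos hcard
  let e₀ (v : ℚ) := (Finite.card_eq.1 (hfiber v)).some
  exact ⟨Equiv.ofFiberEquiv e₀, Equiv.ofFiberEquiv_map e₀⟩

theorem exists_conj [Finite α] (F : IsFundamental π lam ν G) (F' : IsFundamental π' lam' ν' G')
    (hν : ∃ u : Perm α, ∀ j, ν' j = ν (u j)) :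
    ∃ w : Perm α, (∀ j, w (π j) = π' (w j)) ∧ ∀ j, lam' (w j) = lam j := by
  obtain ⟨e₀, he₀⟩ := F.exists_equiv_isCycleMin F' hν
  obtain ⟨w, hwπ, hw⟩ := Perm.exists_conj_of_cycle_reps (exists_isCycleMin_pow_apply_eq π G)
    (fun _ _ hb hb' => F.eq_of_isCycleMin hb hb') (fun _ _ hb hb' => F'.eq_of_isCycleMin hb hb')
    e₀ e₀.injective
    (fun b s t => by rw [F.pow_apply_eq_pow_apply_iff, F'.pow_apply_eq_pow_apply_iff, he₀])
  refine ⟨w, hwπ, fun j => ?_⟩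
  obtain ⟨b, t, rfl⟩ := exists_isCycleMin_pow_apply_eq π G j
  rw [hw]
  have h : (lam' ((π' ^ t) (e₀ b)) : ℚ) = lam ((π ^ t) b) := by
    rw [F'.lam_pow_apply_of_isCycleMin (e₀ b).2, he₀, F.lam_pow_apply_of_isCycleMin b.2]
  exact_mod_cast h

end IsFundamental

section Levels

variable {α : Type*} [Fintype α]

def level (c : α → ℚ) (j : α) : Finset α := {i | c i = c j}

@[simp]
theorem mem_level {c : α → ℚ} {i j : α} : i ∈ level c j ↔ c i = c j := by simp [level]

theorem level_eq_of_eq {c : α → ℚ} {i j : α} (h : c i = c j) : level c i = level c j := by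
  ext; simp [h]

theorem card_level_pos (c : α → ℚ) (j : α) : 0 < #(level c j) :=
  Finset.card_pos.2 ⟨j, mem_level.2 rfl⟩

noncomputable def levelMean (c : α → ℚ) (lam : α → ℤ) (j : α) : ℚ :=
  (∑ i ∈ level c j, (lam i : ℚ)) / #(level c j)

variable [LinearOrder α]

def levelRank (c : α → ℚ) (j : α) : ℕ := #{i ∈ level c j | i < j}

noncomputable def levelFrac (c : α → ℚ) (j : α) : ℚ := levelRank c j / #(level c j)

variable {c : α → ℚ}

theorem levelRank_lt_card_level (j : α) : levelRank c j < #(level c j) :=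
  Finset.card_lt_card <| Finset.filter_ssubset.2 ⟨j, mem_level.2 rfl, lt_irrefl j⟩

theorem levelRank_lt_levelRank {i j : α} (hij : i < j) (hc : c i = c j) :
    levelRank c i < levelRank c j := by
  refine Finset.card_lt_card (Finset.ssubset_iff_of_subset ?_ |>.2 ?_)
  · intro k
    simp only [Finset.mem_filter, mem_level, hc]
    exact fun hk => ⟨hk.1, hk.2.trans hij⟩
  · exact ⟨i, by simp [hc, hij], by simp⟩

theorem eq_of_levelRank_eq {i j : α} (hc : c i = c j) (h : levelRank c i = levelRank c j) :
    i = j := by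
  rcases lt_trichotomy i j with hij | hij | hij
  · exact absurd h (levelRank_lt_levelRank hij hc).ne
  · exact hij
  · exact absurd h (levelRank_lt_levelRank hij hc.symm).ne'

theorem levelFrac_nonneg (j : α) : 0 ≤ levelFrac c j := by unfold levelFrac; positivity

theorem levelFrac_lt_one (j : α) : levelFrac c j < 1 := by
  rw [levelFrac, div_lt_one (by exact_mod_cast card_level_pos c j)]
  exact_mod_cast levelRank_lt_card_level j

end Levels

theorem newtonPt_eq_of_lam_eq {h : ℕ} {π : Perm (Fin h)} {lam : Fin h → ℤ} {μ G : Fin h → ℚ}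
    (hμ : ∀ j, μ (π j) = μ j) (hlam : ∀ j, (lam j : ℚ) = μ j + G (π j) - G j) (j : Fin h) :
    newtonPt π lam j = μ j := by
  have hμ_pow (n : ℕ) : μ ((π ^ n) j) = μ j := by
    induction n with
    | zero => rfl
    | succ n ih => rw [pow_succ', Perm.mul_apply, hμ, ih]
  have hterm (n : ℕ) :
      (lam ((π ^ n) j) : ℚ) = μ j + (G ((π ^ (n + 1)) j) - G ((π ^ n) j)) := by
    rw [hlam, hμ_pow, pow_succ', Perm.mul_apply]; ring
  have hord : ((orderOf π : ℕ) : ℚ) ≠ 0 := by exact_mod_cast (orderOf_pos π).ne'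
  -- the `G`-terms telescope over a full period of `π`
  rw [newtonPt, Finset.sum_congr rfl fun n _ => hterm n, Finset.sum_add_distrib,
    Finset.sum_range_sub (fun n => G ((π ^ n) j)), pow_orderOf_eq_one]
  simp only [Finset.sum_const, Finset.card_range, nsmul_eq_mul, Perm.one_apply, pow_zero,
    sub_self, add_zero]
  exact mul_div_cancel_left₀ _ hord

namespace PFund

variable {h : ℕ} {c : Fin h → ℚ} {π : Perm (Fin h)} {lam : Fin h → ℤ}

theorem apply_pow (H : PFund c π lam) (n : ℕ) (j : Fin h) : c ((π ^ n) j) = c j := by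
  induction n with
  | zero => rfl
  | succ n ih => rw [pow_succ', Perm.mul_apply, H.1, ih]

theorem level_apply (H : PFund c π lam) (j : Fin h) : level c (π j) = level c j :=
  level_eq_of_eq (H.1 j)

theorem levelRank_apply (H : PFund c π lam) (j : Fin h) :
    (levelRank c (π j) : ℤ) = levelRank c j + #(level c j) * lam j - ∑ i ∈ level c j, lam i := by
  have himage : (level c j).image π = level c j :=
    Finset.eq_of_subset_of_card_le
      (fun _ hx => by obtain ⟨i, hi, rfl⟩ := Finset.mem_image.1 hx; simpa [H.1] using hi)
      (Finset.card_image_of_injective _ π.injective).ge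
  have hrank : levelRank c (π j) = #{i ∈ level c j | π i < π j} := by
    rw [levelRank, H.level_apply]
    conv_lhs => rw [← himage]
    rw [Finset.filter_image, Finset.card_image_of_injective _ π.injective]
  -- the Levi condition of `PFund` says how `π` moves the order within a level
  have hstep : ∀ i ∈ level c j,
      ((if π i < π j then 1 else 0) - if i < j then 1 else 0 : ℤ) = lam j - lam i := by
    intro i hi
    rcases eq_or_ne i j with rfl | hij
    · simp
    · have := H.2.1 i j hij (mem_level.1 hi)
      have hπ : π i ≠ π j := π.injective.ne hij
      unfold dlt at this
      split_ifs at this ⊢ <;> omega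
  have hsum := Finset.sum_congr rfl hstep
  rw [Finset.sum_sub_distrib, Finset.sum_sub_distrib, Finset.sum_const, nsmul_eq_mul,
    ← Finset.sum_filter, ← Finset.sum_filter] at hsum
  simp only [Finset.sum_const, nsmul_eq_mul, mul_one] at hsum
  rw [hrank, levelRank]
  linarith

theorem lam_eq (H : PFund c π lam) (j : Fin h) :
    (lam j : ℚ) = levelMean c lam j + levelFrac c (π j) - levelFrac c j := by
  have hcard : (#(level c j) : ℚ) ≠ 0 := by exact_mod_cast (card_level_pos c j).ne'
  have hrank : (levelRank c (π j) : ℚ) =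
      levelRank c j + #(level c j) * lam j - ∑ i ∈ level c j, (lam i : ℚ) := by
    exact_mod_cast H.levelRank_apply j
  rw [levelMean, levelFrac, levelFrac, H.level_apply, hrank]
  field_simp
  ring

theorem isFundamental (H : PFund c π lam) :
    IsFundamental π lam (newtonPt π lam) (levelFrac c) := by
  have hmean (j : Fin h) : levelMean c lam (π j) = levelMean c lam j := by
    rw [levelMean, levelMean, H.level_apply]
  have hnewton : newtonPt π lam = levelMean c lam :=
    funext (newtonPt_eq_of_lam_eq hmean H.lam_eq)
  refine ⟨fun j => by rw [hnewton, hmean], levelFrac_nonneg, levelFrac_lt_one,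
    fun j => by rw [hnewton, H.lam_eq], fun i j hij hG => ?_⟩
  have hc : c i = c j := by
    obtain ⟨n, rfl⟩ := hij.exists_nat_pow_eq
    exact (H.apply_pow n i).symm
  have hcard : (#(level c j) : ℚ) ≠ 0 := by exact_mod_cast (card_level_pos c j).ne'
  rw [levelFrac, levelFrac, level_eq_of_eq hc, div_left_inj' hcard] at hG
  exact eq_of_levelRank_eq hc (by exact_mod_cast hG)

end PFund

theorem stmt13_general (h : ℕ) (c c' : Fin h → ℚ) (π π' : Equiv.Perm (Fin h))
    (lam lam' : Fin h → ℤ)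
    (hx : PFund c π lam) (hx' : PFund c' π' lam')
    (hNewton : ∃ u : Equiv.Perm (Fin h), ∀ j, newtonPt π' lam' j = newtonPt π lam (u j)) :
    ∃ w : Equiv.Perm (Fin h), π' = w * π * w⁻¹ ∧ ∀ j, lam' j = lam (w⁻¹ j) := by
  obtain ⟨w, hwπ, hw⟩ := hx.isFundamental.exists_conj hx'.isFundamental hNewton
  refine ⟨w, Equiv.ext fun j => ?_, fun j => ?_⟩
  · rw [Perm.mul_apply, Perm.mul_apply, hwπ, Perm.coe_inv, apply_symm_apply]
  · rw [← hw, Perm.coe_inv, apply_symm_apply]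

/-- Lemma 3.3(1), for `G = GL_h` split, where `σ` fixes `W̃` pointwise: if
`x = π ε^λ` and `x' = π' ε^{λ'}` are `P_c`- resp. `P_{c'}`-fundamental elements of `W̃` in
the same `σ`-conjugacy class of `G(L)` — by Kottwitz's classification: their Newton points
lie in the same `W`-orbit and their Kottwitz invariants `κ = Σ λ` agree — then they are
conjugate under the finite Weyl group `W = S_h`: there is `w` with `x' = w x w⁻¹`,
i.e. `π' = w π w⁻¹` and `λ' = λ ∘ w⁻¹`; in particular they are `K`-`σ`-conjugate. -/
theorem stmt13 (h : ℕ) (c c' : Fin h → ℚ) (π π' : Equiv.Perm (Fin h))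
    (lam lam' : Fin h → ℤ)
    (hx : PFund c π lam) (hx' : PFund c' π' lam')
    (hNewton : ∃ u : Equiv.Perm (Fin h), ∀ j, newtonPt π' lam' j = newtonPt π lam (u j))
    (hκ : ∑ j, lam j = ∑ j, lam' j) :
    ∃ w : Equiv.Perm (Fin h), π' = w * π * w⁻¹ ∧ ∀ j, lam' j = lam (w⁻¹ j) :=
  stmt13_general h c c' π π' lam lam' hx hx' hNewton
end

section
/- Let μ ∈ X_*(T) be dominant and w ∈ ^μW = σ^{-1}(^{M_μ}W). Then l(w τ_μ) = l(w) + l(τ_μ), where τ_μ is the minimal length element of W ε^μ W. -/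
/-- The length of an element of the finite Weyl group `S_h` of `GL_h`
(number of inversions). -/
def lenW (h : ℕ) (w : Equiv.Perm (Fin h)) : ℕ :=
  (Finset.univ.filter (fun p : Fin h × Fin h => p.1 < p.2 ∧ w p.2 < w p.1)).card

/-- The length of the element `w ε^λ` of the extended affine Weyl group
`W̃ = S_h ⋉ ℤ^h` of `GL_h`, via the standard formula
`ℓ(w ε^λ) = Σ_{α>0, wα>0} |⟨λ,α⟩| + Σ_{α>0, wα<0} |⟨λ,α⟩ − 1|`. -/
def lenA (h : ℕ) (w : Equiv.Perm (Fin h)) (lam : Fin h → ℤ) : ℕ :=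
  ∑ p ∈ Finset.univ.filter (fun p : Fin h × Fin h => p.1 < p.2),
    if w p.1 < w p.2 then (lam p.1 - lam p.2).natAbs else (lam p.1 - lam p.2 - 1).natAbs

/-! The longest element of the stabiliser of an antitone `μ` reverses exactly the pairs lying
in one fibre of `μ`: a stabiliser can reverse no other pair, and sorting by `(μ i, i)` in
reverse lexicographic order produces one that reverses all of them. For constant `μ` this says
that `w₀` reverses every pair, so `x_μ = w₀ w_{0,μ}` keeps the order of the pairs inside a
fibre and reverses the pairs across fibres. In the length formula a pair `(i, j)` then
contributes exactly one more to `ℓ(w x_μ ε^μ)` than to `ℓ(x_μ ε^μ)` if `w` inverts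
`{x_μ i, x_μ j}`, and the same otherwise; as `x_μ` permutes the pairs, these extra
contributions add up to `ℓ(w)`. -/

open Finset Equiv

theorem Finset.sum_lt_pairs_min_max_perm {α M : Type*} [LinearOrder α] [Fintype α]
    [AddCommMonoid M] (x : Perm α) (f : α × α → M) :
    ∑ p ∈ univ.filter (fun p : α × α => p.1 < p.2),
        f (min (x p.1) (x p.2), max (x p.1) (x p.2)) =
      ∑ p ∈ univ.filter (fun p : α × α => p.1 < p.2), f p := by
  have min_max_symm : ∀ (y : Perm α) {a b : α}, a < b →
      min (y.symm (min (y a) (y b))) (y.symm (max (y a) (y b))) = a ∧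
        max (y.symm (min (y a) (y b))) (y.symm (max (y a) (y b))) = b := by
    intro y a b hab
    rcases le_total (y a) (y b) with hy | hy <;> simp [hy, hab.le]
  refine sum_nbij' (fun p => (min (x p.1) (x p.2), max (x p.1) (x p.2)))
    (fun p => (min (x.symm p.1) (x.symm p.2), max (x.symm p.1) (x.symm p.2)))
    ?_ ?_ ?_ ?_ (fun _ _ => rfl)
  all_goals simp only [mem_filter, mem_univ, true_and, min_lt_max, ne_eq,
    EmbeddingLike.apply_eq_iff_eq]
  · exact fun p hp => hp.ne
  · exact fun p hp => hp.ne
  · exact fun p hp => Prod.ext_iff.2 (min_max_symm x hp)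
  · intro p hp
    simpa using Prod.ext_iff.2 (min_max_symm x.symm hp)

variable {h : ℕ} {μ : Fin h → ℤ}

theorem Antitone.exists_stabilizer_reversing_fibers (hμ : Antitone μ) :
    ∃ u : Perm (Fin h), μ ∘ u = μ ∧ ∀ i j, i < j → μ i = μ j → u j < u i := by
  set key : Fin h → ℤᵒᵈ ×ₗ (Fin h)ᵒᵈ := fun i =>
    toLex (OrderDual.toDual (μ i), OrderDual.toDual i)
  have key_inj : Function.Injective key := fun i j hij => by
    simpa [key] using congrArg (fun k => OrderDual.ofDual (ofLex k).2) hij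
  set s := Tuple.sort key
  have hs : StrictMono (key ∘ s) :=
    (Tuple.monotone_sort key).strictMono_of_injective (key_inj.comp s.injective)
  have hμs : μ ∘ s = μ := by
    have : Antitone (μ ∘ s) := fun a b hab =>
      Prod.Lex.monotone_fst _ _ ((Tuple.monotone_sort key) hab)
    simpa using Tuple.unique_antitone (σ := s) (τ := 1) this hμ
  refine ⟨s.symm, ?_, fun i j hij hμij => hs.lt_iff_lt.mp ?_⟩
  · funext i
    simpa using (congrFun hμs (s.symm i)).symm
  · simp [key, Prod.Lex.toLex_lt_toLex, hμij, hij]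

theorem Antitone.eq_of_lt_of_comp_perm_eq (hμ : Antitone μ) {v : Perm (Fin h)}
    (hv : μ ∘ v = μ) {i j : Fin h} (hij : i < j) (hvij : v j < v i) : μ i = μ j := by
  have hvμ : ∀ k, μ (v k) = μ k := congrFun hv
  refine le_antisymm ?_ (hμ hij.le)
  simpa only [hvμ] using hμ hvij.le

theorem Antitone.lt_iff_of_isLongest_stabilizer (hμ : Antitone μ) {v : Perm (Fin h)}
    (hv : μ ∘ v = μ) (hmax : ∀ u : Perm (Fin h), μ ∘ u = μ → lenW h u ≤ lenW h v)
    {i j : Fin h} (hij : i < j) : v j < v i ↔ μ i = μ j := by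
  obtain ⟨u, hu, hrev⟩ := hμ.exists_stabilizer_reversing_fibers
  set S := univ.filter (fun p : Fin h × Fin h => p.1 < p.2 ∧ μ p.1 = μ p.2)
  have hvS : univ.filter (fun p : Fin h × Fin h => p.1 < p.2 ∧ v p.2 < v p.1) ⊆ S := by
    intro p
    simp only [mem_filter, mem_univ, true_and, S]
    exact fun ⟨hp, hvp⟩ => ⟨hp, hμ.eq_of_lt_of_comp_perm_eq hv hp hvp⟩
  have hSu : S ⊆ univ.filter (fun p : Fin h × Fin h => p.1 < p.2 ∧ u p.2 < u p.1) := by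
    intro p
    simp only [mem_filter, mem_univ, true_and, S]
    exact fun ⟨hp, hμp⟩ => ⟨hp, hrev _ _ hp hμp⟩
  have hvS_eq := eq_of_subset_of_card_le hvS ((card_le_card hSu).trans (hmax u hu))
  simpa [S, hij] using congrArg (fun T => (i, j) ∈ T) hvS_eq

theorem lenW_eq_sum (w : Perm (Fin h)) :
    lenW h w = ∑ p ∈ univ.filter (fun p : Fin h × Fin h => p.1 < p.2),
      if w p.2 < w p.1 then 1 else 0 := by
  rw [lenW, ← filter_filter, card_filter]

theorem lenA_mul_of_lt_iff (hμ : Antitone μ) {x : Perm (Fin h)}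
    (hx : ∀ i j, i < j → (x i < x j ↔ μ i = μ j)) (w : Perm (Fin h)) :
    lenA h (w * x) μ = lenW h w + lenA h x μ := by
  rw [lenW_eq_sum, ← sum_lt_pairs_min_max_perm x, lenA, lenA, ← sum_add_distrib]
  refine sum_congr rfl fun p hp => ?_
  obtain ⟨i, j⟩ := p
  replace hp : i < j := by simpa using hp
  have hμij : μ j ≤ μ i := hμ hp.le
  have hwx : w (x i) ≠ w (x j) := w.injective.ne (x.injective.ne hp.ne)
  simp only [Perm.mul_apply]
  rcases eq_or_lt_of_le hμij with hμeq | hμlt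
  · have hxij : x i < x j := (hx i j hp).2 hμeq.symm
    rw [min_eq_left hxij.le, max_eq_right hxij.le]
    rcases hwx.lt_or_gt with hw | hw <;> simp [hw, hw.not_gt, hxij, hμeq]
  · have hxji : x j < x i :=
      (not_lt.1 ((hx i j hp).not.2 hμlt.ne')).lt_of_ne (x.injective.ne hp.ne')
    rw [min_eq_right hxji.le, max_eq_left hxji.le]
    rcases hwx.lt_or_gt with hw | hw
    · simp only [hw, hxji.not_gt, if_true, if_false]
      omega
    · simp [hw.not_gt, hxji.not_gt]

-- `w₀` is the longest element of the stabiliser of a constant coweight.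
theorem strictAnti_of_isLongest {w0 : Perm (Fin h)} (hw0 : ∀ w, lenW h w ≤ lenW h w0) :
    StrictAnti w0 := fun _ _ hij =>
  ((antitone_const (β := ℤ) (c := 0)).lt_iff_of_isLongest_stabilizer rfl
    (fun u _ => hw0 u) hij).2 rfl

theorem stmt14_general (h : ℕ) (μ : Fin h → ℤ) (hμ : Antitone μ)
    (w0 w0μ : Equiv.Perm (Fin h))
    (hw0 : ∀ w : Equiv.Perm (Fin h), lenW h w ≤ lenW h w0)
    (hstab : μ ∘ ⇑w0μ = μ)
    (hw0μ : ∀ w : Equiv.Perm (Fin h), μ ∘ ⇑w = μ → lenW h w ≤ lenW h w0μ)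
    (w : Equiv.Perm (Fin h)) :
    lenA h (w * (w0 * w0μ)) μ = lenW h w + lenA h (w0 * w0μ) μ := by
  refine lenA_mul_of_lt_iff hμ (fun i j hij => ?_) w
  rw [Perm.mul_apply, Perm.mul_apply, StrictAnti.lt_iff_gt (strictAnti_of_isLongest hw0)]
  exact hμ.lt_iff_of_isLongest_stabilizer hstab hw0μ hij

/-- for `G = GL_h`: let `μ ∈ ℤ^h` be dominant, `w₀` the longest element of
`W = S_h`, `w_{0,μ}` the longest element of `W_{M_μ} = {u : μ ∘ u = μ}`, `x_μ = w₀ w_{0,μ}`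
and `τ_μ = x_μ ε^μ` (so `w τ_μ` is the pair `(w x_μ, μ)`). Let `σ` be a length-preserving
automorphism of `W` (diagram automorphism) and let `w ∈ ᵘW = σ⁻¹(^{M_μ}W)`, i.e. `σ(w)` is
of minimal length in its coset `W_{M_μ} σ(w)`. Then `ℓ(w τ_μ) = ℓ(w) + ℓ(τ_μ)`. -/
theorem stmt14 (h : ℕ) (μ : Fin h → ℤ) (hμ : Antitone μ)
    (w0 w0μ : Equiv.Perm (Fin h))
    (hw0 : ∀ w : Equiv.Perm (Fin h), lenW h w ≤ lenW h w0)
    (hstab : μ ∘ ⇑w0μ = μ)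
    (hw0μ : ∀ w : Equiv.Perm (Fin h), μ ∘ ⇑w = μ → lenW h w ≤ lenW h w0μ)
    (σ : Equiv.Perm (Fin h) ≃* Equiv.Perm (Fin h))
    (hσlen : ∀ w : Equiv.Perm (Fin h), lenW h (σ w) = lenW h w)
    (w : Equiv.Perm (Fin h))
    (hw : ∀ u : Equiv.Perm (Fin h), μ ∘ ⇑u = μ →
      lenW h (σ w) ≤ lenW h (u * σ w)) :
    lenA h (w * (w0 * w0μ)) μ = lenW h w + lenA h (w0 * w0μ) μ :=
  stmt14_general h μ hμ w0 w0μ hw0 hstab hw0μ w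
end

section
/- In a Coxeter group W, if a ≤ b, c ≤ d in Bruhat order, and l(db) = l(d) + l(b), then ca ≤ db. -/
/-- in a Coxeter group `W`, if `a ≤ b` and `c ≤ d` in Bruhat order and
`ℓ(d b) = ℓ(d) + ℓ(b)`, then `c a ≤ d b`. -/
theorem stmt17 {B W : Type*} [Group W] {M : CoxeterMatrix B} (cs : CoxeterSystem M W)
    (a b c d : W) (hab : BruhatLE cs a b) (hcd : BruhatLE cs c d)
    (hlen : cs.length (d * b) = cs.length d + cs.length b) :
    BruhatLE cs (c * a) (d * b) := by
  obtain ⟨ωb, hrb, hpb, ωa, hsa, hpa⟩ := hab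
  obtain ⟨ωd, hrd, hpd, ωc, hsc, hpc⟩ := hcd
  refine ⟨ωd ++ ωb, ?_, ?_, ωc ++ ωa, hsc.append hsa, ?_⟩
  · unfold CoxeterSystem.IsReduced at *
    rw [cs.wordProd_append, hpb, hpd, hlen, List.length_append, ← hpb, ← hpd, hrb, hrd]
  · rw [cs.wordProd_append, hpb, hpd]
  · rw [cs.wordProd_append, hpa, hpc]
end
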